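/- arXiv:1403.3741 — 2 statements merged into one kernel-verified Lean document; each statement's English description precedes it below -/
import Mathlib

section
/- Let Y be a finite nonempty set, let p be a probability mass function on Y, and let X₁, …, Xₙ (n ≥ 1) be independent random variables each distributed according to p, with empirical distribution p̂ₙ(y) := (1/n)·|{i ∈ {1,…,n} : Xᵢ = y}|. Then for every δ ∈ (0,1], ℙ( Σ_{y∈Y} |p(y) − p̂ₙ(y)| ≥ √( (2·|Y|/n) · log(2/δ) ) ) ≤ δ. -/
open MeasureTheory ProbabilityTheory Finset
open scoped Classical

/-! Since `p` and `p̂ₙ` both sum to one, `‖p − p̂ₙ‖₁ = 2 (p(A) − p̂ₙ(A))` for `A = {p̂ₙ < p}`.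
Hence `‖p − p̂ₙ‖₁ ≥ ε` forces, for one of the `2^|Y|` subsets `A`, the number of samples in `A`
to fall `nε/2` below its mean `n p(A)`; by Hoeffding's inequality each of these events has
probability at most `exp (−nε²/2)`. For the `ε` of the statement, `2^|Y| exp (−nε²/2) = δ^|Y|`. -/

lemma measureReal_le_card_mul_sub_card_mem_le {Ω ι Y : Type*} [MeasurableSpace Ω] {P : Measure Ω}
    [IsProbabilityMeasure P] [Fintype ι] [MeasurableSpace Y] {X : ι → Ω → Y}
    (hX : ∀ i, Measurable (X i)) (hindep : iIndepFun X P) {B : Set Y} (hB : MeasurableSet B)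
    {q : ℝ} (hq : ∀ i, P.real (X i ⁻¹' B) = q) {t : ℝ} (ht : 0 ≤ t) :
    P.real {ω | t ≤ Fintype.card ι * q - #{i | X i ω ∈ B}}
      ≤ Real.exp (-2 * t ^ 2 / Fintype.card ι) := by
  let W : ι → Ω → ℝ := fun i ω => q - (X i ⁻¹' B).indicator 1 ω
  have hW_indep : iIndepFun W P :=
    hindep.comp (fun _ y => q - B.indicator 1 y) fun _ =>
      measurable_const.sub (measurable_one.indicator hB)
  have hW_subG :
      ∀ i ∈ (univ : Finset ι), HasSubgaussianMGF (W i) ((‖q - (q - 1)‖₊ / 2) ^ 2) P := by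
    intro i _
    have hpre : MeasurableSet (X i ⁻¹' B) := hX i hB
    refine hasSubgaussianMGF_of_mem_Icc_of_integral_eq_zero
      (measurable_const.sub (measurable_one.indicator hpre)).aemeasurable
      (ae_of_all _ fun ω => ?_) ?_
    · by_cases h : ω ∈ X i ⁻¹' B <;> simp [W, h]
    · simp only [W]
      have hind : Integrable ((X i ⁻¹' B).indicator (1 : Ω → ℝ)) P :=
        (integrable_const 1).indicator hpre
      rw [integral_sub (integrable_const q) hind, integral_indicator_one hpre, hq i]
      simp
  have hsum : ∀ ω, ∑ i, W i ω = Fintype.card ι * q - #{i | X i ω ∈ B} := by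
    intro ω
    simp [W, Set.indicator_apply, Finset.sum_boole]
  calc P.real {ω | t ≤ Fintype.card ι * q - #{i | X i ω ∈ B}}
      = P.real {ω | t ≤ ∑ i, W i ω} := by simp only [hsum]
    _ ≤ Real.exp (-t ^ 2 / (2 * ∑ i, ((‖q - (q - 1)‖₊ / 2) ^ 2 : NNReal))) :=
      HasSubgaussianMGF.measure_sum_ge_le_of_iIndepFun hW_indep hW_subG ht
    _ = Real.exp (-2 * t ^ 2 / Fintype.card ι) := by
      rw [sub_sub_cancel, nnnorm_one, sum_const, card_univ, nsmul_eq_mul]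
      push_cast
      ring_nf

lemma sum_abs_sub_eq_two_mul_sum_filter_lt {Y : Type*} (s : Finset Y) {p q : Y → ℝ}
    (h : ∑ y ∈ s, p y = ∑ y ∈ s, q y) :
    ∑ y ∈ s, |p y - q y| = 2 * ∑ y ∈ s with q y < p y, (p y - q y) := by
  have habs : ∀ y, |p y - q y| = 2 * (if q y < p y then p y - q y else 0) - (p y - q y) := by
    intro y
    split_ifs with hlt
    · rw [abs_of_pos (sub_pos.2 hlt)]; ring
    · rw [abs_of_nonpos (by linarith)]; ring
  rw [sum_congr rfl fun y _ => habs y, sum_sub_distrib, sum_sub_distrib, h, sub_self, sub_zero,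
    ← mul_sum, sum_filter]

noncomputable def empiricalDist {Y : Type*} {n : ℕ} (x : Fin n → Y) (y : Y) : ℝ :=
  (1 / n : ℝ) * #{i | x i = y}

lemma sum_empiricalDist_finset {Y : Type*} {n : ℕ} (x : Fin n → Y) (A : Finset Y) :
    ∑ y ∈ A, empiricalDist x y = (1 / n : ℝ) * #{i | x i ∈ A} := by
  simp only [empiricalDist, ← mul_sum, ← Nat.cast_sum]
  congr 2
  -- the two sides differ only in their decidability instances
  convert sum_card_fiberwise_eq_card_filter univ A x

lemma sum_empiricalDist {Y : Type*} [Fintype Y] {n : ℕ} (hn : 0 < n) (x : Fin n → Y) :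
    ∑ y, empiricalDist x y = 1 := by
  rw [sum_empiricalDist_finset]
  simp only [mem_univ, filter_true, card_univ, Fintype.card_fin]
  field_simp

theorem measureReal_le_sum_abs_sub_empiricalDist_le {Ω Y : Type*} [MeasurableSpace Ω]
    {P : Measure Ω} [IsProbabilityMeasure P] [Fintype Y] [MeasurableSpace Y]
    [MeasurableSingletonClass Y] {p : Y → ℝ} (hp1 : ∑ y, p y = 1) {n : ℕ} (hn : 0 < n)
    {X : Fin n → Ω → Y} (hX : ∀ i, Measurable (X i)) (hindep : iIndepFun X P)
    (hlaw : ∀ i y, P.real (X i ⁻¹' {y}) = p y) {ε : ℝ} (hε : 0 ≤ ε) :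
    P.real {ω | ε ≤ ∑ y, |p y - empiricalDist (X · ω) y|}
      ≤ 2 ^ Fintype.card Y * Real.exp (-n * ε ^ 2 / 2) := by
  let E : Finset Y → Set Ω := fun A =>
    {ω | n * ε / 2 ≤ n * ∑ y ∈ A, p y - #{i | X i ω ∈ A}}
  have hnR : (0 : ℝ) < n := by exact_mod_cast hn
  have hcover : {ω | ε ≤ ∑ y, |p y - empiricalDist (X · ω) y|} ⊆ ⋃ A, E A := by
    intro ω hω
    set A := univ.filter fun y => empiricalDist (X · ω) y < p y
    rw [Set.mem_ofPred_eq, sum_abs_sub_eq_two_mul_sum_filter_lt _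
      (hp1.trans (sum_empiricalDist hn _).symm), sum_sub_distrib, sum_empiricalDist_finset] at hω
    refine Set.mem_iUnion.2 ⟨A, ?_⟩
    calc n * ε / 2 ≤ n * (∑ y ∈ A, p y - 1 / n * #{i | X i ω ∈ A}) := by nlinarith
      _ = n * ∑ y ∈ A, p y - #{i | X i ω ∈ A} := by field_simp
  have hE : ∀ A, P.real (E A) ≤ Real.exp (-n * ε ^ 2 / 2) := by
    intro A
    have hq : ∀ i, P.real (X i ⁻¹' A) = ∑ y ∈ A, p y := fun i => by
      rw [← sum_measureReal_preimage_singleton _ fun y _ => hX i (measurableSet_singleton y)]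
      exact sum_congr rfl fun y _ => hlaw i y
    have hoeffding := measureReal_le_card_mul_sub_card_mem_le hX hindep A.measurableSet hq
      (by positivity : 0 ≤ n * ε / 2)
    simp only [Finset.mem_coe, Fintype.card_fin] at hoeffding
    calc P.real (E A) ≤ Real.exp (-2 * (n * ε / 2) ^ 2 / n) := hoeffding
      _ = Real.exp (-n * ε ^ 2 / 2) := by congr 1; field_simp
  calc _ ≤ P.real (⋃ A, E A) := measureReal_mono hcover
    _ ≤ ∑ A, P.real (E A) := measureReal_iUnion_fintype_le E
    _ ≤ ∑ _A : Finset Y, Real.exp (-n * ε ^ 2 / 2) := sum_le_sum fun A _ => hE A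
    _ = _ := by rw [sum_const, card_univ, Fintype.card_finset, nsmul_eq_mul]; push_cast; ring

/-- Corollary of Lemma 2: for i.i.d. samples X₁,…,Xₙ (n ≥ 1) from a pmf p on a finite
set Y and any δ ∈ (0,1],
ℙ( ‖p − p̂ₙ‖₁ ≥ √((2|Y|/n)·log(2/δ)) ) ≤ δ. -/
theorem weissman_l1_confidence
    {Ω : Type*} [MeasurableSpace Ω] (P : Measure Ω) [IsProbabilityMeasure P]
    {Y : Type*} [Fintype Y] [Nonempty Y] [MeasurableSpace Y] [MeasurableSingletonClass Y]
    (p : Y → ℝ) (hp0 : ∀ y, 0 ≤ p y) (hp1 : ∑ y, p y = 1)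
    (n : ℕ) (hn : 1 ≤ n) (X : Fin n → Ω → Y)
    (hmeas : ∀ i, Measurable (X i))
    (hindep : iIndepFun X P)
    (hlaw : ∀ i y, P {ω | X i ω = y} = ENNReal.ofReal (p y))
    (δ : ℝ) (hδ0 : 0 < δ) (hδ1 : δ ≤ 1) :
    P {ω | Real.sqrt ((2 * (Fintype.card Y : ℝ) / n) * Real.log (2 / δ))
            ≤ ∑ y, |p y - (1 / n : ℝ) * ((univ.filter (fun i => X i ω = y)).card : ℝ)|}
      ≤ ENNReal.ofReal δ := by
  set k := Fintype.card Y
  set ε := Real.sqrt ((2 * (k : ℝ) / n) * Real.log (2 / δ))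
  have hlaw_real : ∀ i y, P.real (X i ⁻¹' {y}) = p y := fun i y => by
    rw [measureReal_def, ← ENNReal.toReal_ofReal (hp0 y), ← hlaw i y]
    rfl
  have hweissman : P.real {ω | ε ≤ ∑ y, |p y - empiricalDist (X · ω) y|}
      ≤ 2 ^ k * Real.exp (-n * ε ^ 2 / 2) :=
    measureReal_le_sum_abs_sub_empiricalDist_le hp1 hn hmeas hindep hlaw_real (Real.sqrt_nonneg _)
  have hexp : 2 ^ k * Real.exp (-n * ε ^ 2 / 2) = δ ^ k := by
    have hlog : 0 ≤ Real.log (2 / δ) :=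
      Real.log_nonneg (by rw [le_div_iff₀ hδ0]; linarith)
    have hn' : (n : ℝ) ≠ 0 := by positivity
    rw [Real.sq_sqrt (by positivity),
      show -n * (2 * k / n * Real.log (2 / δ)) / 2 = k * -Real.log (2 / δ) by field_simp,
      Real.exp_nat_mul, ← Real.log_inv, Real.exp_log (by positivity), ← mul_pow, inv_div,
      mul_div_cancel₀ δ two_ne_zero]
  rw [ENNReal.le_ofReal_iff_toReal_le (measure_ne_top _ _) hδ0.le]
  calc _ ≤ 2 ^ k * Real.exp (-n * ε ^ 2 / 2) := hweissman
    _ = δ ^ k := hexp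
    _ ≤ δ := pow_le_of_le_one hδ0.le hδ1 Fintype.card_ne_zero
end

section
/- Let X be a finite set, V a seminormed real vector space, and F a nonempty set of functions X → V whose width w_F(x) := sup_{f,g∈F} ‖f(x) − g(x)‖ satisfies w_F(x) ≤ C for all x ∈ X, where C ≥ 0. Let x₁, …, x_T ∈ X with T = L·τ for positive integers L and τ, set t_k := (k−1)·τ, and let n_t(x) := |{s ∈ {1,…,t−1} : x_s = x}|. Let (d_t)_{t≥1} be a nondecreasing sequence of nonnegative reals and let f̂_t : X → V be arbitrary functions. For each t define the confidence set F_t := { f ∈ F : ‖f(x_i) − f̂_t(x_i)‖ ≤ √( d_t / n_t(x_i) ) for every i ∈ {1,…,t−1} with n_t(x_i) > 0 }. Then Σ_{k=1}^{L} Σ_{i=1}^{τ} w_{F_{t_k}}(x_{t_k+i}) ≤ 4·( τ·C·|X| + 1 ) + 4·√( 2·d_T·|X|·T ). -/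
/-!
Split the times according to whether the current point had been visited at least `τ` times
before the start of its episode. Counts grow by at most `τ` within an episode, so each point is in
the first case at most `2τ` times, which costs at most `2τC|X|`. In the second case
`n_t ≤ 2 n_start`, and the width of the confidence set built at the episode start is at most
`2√(d_start / n_start) ≤ 2√(2 d_T) / √n_t`. The counts at successive visits to a point `y` are
`0, 1, 2, …`, so `∑_t 1/√n_t ≤ ∑_y 2√c_y ≤ 2√(|X| T)` by Cauchy–Schwarz, where `c_y` is the
number of visits to `y`.
-/

open Finset
open scoped Classical

lemma inv_sqrt_add_one_le {a : ℝ} (ha : 0 ≤ a) : (√(a + 1))⁻¹ ≤ 2 * (√(a + 1) - √a) := by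
  have hb : 0 < √(a + 1) := Real.sqrt_pos.2 (by linarith)
  have hsq : √(a + 1) ^ 2 = a + 1 := Real.sq_sqrt (by linarith)
  have hsa : √a ^ 2 = a := Real.sq_sqrt ha
  rw [inv_le_iff_one_le_mul₀' hb]
  nlinarith [sq_nonneg (√(a + 1) - √a), Real.sqrt_nonneg a]

-- The term `j = 0` is `(√0)⁻¹ = 0`.
lemma sum_range_inv_sqrt_le (n : ℕ) : ∑ j ∈ range n, (√j)⁻¹ ≤ 2 * √n := by
  rcases n with _ | m
  · simp
  rw [sum_range_succ']
  calc ∑ j ∈ range m, (√(j + 1 : ℕ))⁻¹ + (√(0 : ℕ))⁻¹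
      ≤ ∑ j ∈ range m, 2 * (√(j + 1 : ℕ) - √j) := by
        simpa using sum_le_sum fun j _ => inv_sqrt_add_one_le j.cast_nonneg
    _ = 2 * √m := by rw [← mul_sum, sum_range_sub (fun j : ℕ => √j)]; simp
    _ ≤ 2 * √(m + 1 : ℕ) := by gcongr; omega

lemma sqrt_div_le_sqrt_two_mul_div_sqrt {a b n m : ℝ} (hab : a ≤ b) (hn : 0 < n) (hm : 0 < m)
    (hmn : m ≤ 2 * n) : √(a / n) ≤ √(2 * b) / √m :=
  calc √(a / n) ≤ √(b / n) := Real.sqrt_le_sqrt (div_le_div_of_nonneg_right hab hn.le)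
    _ = √(2 * b) / √(2 * n) := by
        rw [← mul_div_mul_left b n two_ne_zero, Real.sqrt_div' _ (by positivity)]
    _ ≤ √(2 * b) / √m :=
        div_le_div_of_nonneg_left (Real.sqrt_nonneg _) (Real.sqrt_pos.2 hm) (Real.sqrt_le_sqrt hmn)

section VisitCount

variable {X : Type*}

/-- The paper's `n_t(y)`; times start at `1`, so `x 0` is never counted. -/
noncomputable def visitCount (x : ℕ → X) (t : ℕ) (y : X) : ℕ :=
  #{s ∈ Ico 1 t | x s = y}

variable (x : ℕ → X)

lemma visitCount_mono {s t : ℕ} (hst : s ≤ t) (y : X) : visitCount x s y ≤ visitCount x t y :=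
  card_le_card (filter_subset_filter _ (Ico_subset_Ico_right hst))

lemma visitCount_le_add (s t : ℕ) (y : X) : visitCount x t y ≤ visitCount x s y + (t - s) := by
  have hsub : {r ∈ Ico 1 t | x r = y} ⊆ {r ∈ Ico 1 s | x r = y} ∪ Ico s t := by
    intro r hr
    simp only [mem_union, mem_filter, mem_Ico] at hr ⊢
    rcases lt_or_ge r s with hrs | hrs
    · exact Or.inl ⟨⟨hr.1.1, hrs⟩, hr.2⟩
    · exact Or.inr ⟨hrs, hr.1.2⟩
  calc visitCount x t y ≤ #({r ∈ Ico 1 s | x r = y} ∪ Ico s t) := card_le_card hsub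
    _ ≤ visitCount x s y + #(Ico s t) := card_union_le _ _
    _ = visitCount x s y + (t - s) := by rw [Nat.card_Ico]

lemma visitCount_pos {s t : ℕ} (hs : s ∈ Ico 1 t) : 0 < visitCount x t (x s) :=
  card_pos.2 ⟨s, mem_filter.2 ⟨hs, rfl⟩⟩

lemma visitCount_lt_visitCount {s t : ℕ} (hs : 1 ≤ s) (hst : s < t) :
    visitCount x s (x s) < visitCount x t (x s) := by
  have hsub : insert s {r ∈ Ico 1 s | x r = x s} ⊆ {r ∈ Ico 1 t | x r = x s} := by
    intro r hr
    simp only [mem_insert, mem_filter, mem_Ico] at hr ⊢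
    rcases hr with rfl | ⟨⟨h1, hrs⟩, hxr⟩
    · exact ⟨⟨hs, hst⟩, rfl⟩
    · exact ⟨⟨h1, hrs.trans hst⟩, hxr⟩
  have hnot : s ∉ {r ∈ Ico 1 s | x r = x s} := by simp
  have := card_le_card hsub
  rwa [card_insert_of_notMem hnot, Nat.add_one_le_iff] at this

lemma strictMonoOn_visitCount (y : X) :
    StrictMonoOn (visitCount x · y) {t | 1 ≤ t ∧ x t = y} := by
  rintro s ⟨hs, rfl⟩ t - hst
  exact visitCount_lt_visitCount x hs hst

lemma sum_visitCount [Fintype X] (t : ℕ) : ∑ y, visitCount x t y = t - 1 := by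
  have := card_eq_sum_card_fiberwise (f := x) (s := Ico 1 t) (fun _ _ => mem_univ _)
  rw [Nat.card_Ico] at this
  exact this.symm

lemma sum_inv_sqrt_visitCount_fiber_le (T : ℕ) (y : X) :
    ∑ t ∈ Icc 1 T with x t = y, (√(visitCount x t y))⁻¹ ≤ 2 * √(visitCount x (T + 1) y) := by
  have hinj : Set.InjOn (visitCount x · y) ↑{t ∈ Icc 1 T | x t = y} :=
    (strictMonoOn_visitCount x y).injOn.mono fun t ht => by
      simp only [coe_filter, mem_Icc, Set.mem_ofPred_eq] at ht ⊢
      exact ⟨ht.1.1, ht.2⟩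
  have himage :
      image (visitCount x · y) {t ∈ Icc 1 T | x t = y} ⊆ range (visitCount x (T + 1) y) := by
    simp only [image_subset_iff, mem_filter, mem_Icc, mem_range, and_imp]
    rintro t ht1 htT rfl
    exact visitCount_lt_visitCount x ht1 (Nat.lt_succ_of_le htT)
  calc ∑ t ∈ Icc 1 T with x t = y, (√(visitCount x t y))⁻¹
      = ∑ j ∈ image (visitCount x · y) {t ∈ Icc 1 T | x t = y}, (√j)⁻¹ :=
        (sum_image (f := fun j : ℕ => (√j)⁻¹) hinj).symm
    _ ≤ ∑ j ∈ range (visitCount x (T + 1) y), (√j)⁻¹ :=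
        sum_le_sum_of_subset_of_nonneg himage fun _ _ _ => by positivity
    _ ≤ 2 * √(visitCount x (T + 1) y) := sum_range_inv_sqrt_le _

-- First visits, with count `0`, contribute `(√0)⁻¹ = 0`.
lemma sum_inv_sqrt_visitCount_le [Fintype X] (T : ℕ) :
    ∑ t ∈ Icc 1 T, (√(visitCount x t (x t)))⁻¹ ≤ 2 * √(Fintype.card X * T) := by
  have hT : ∑ y, (visitCount x (T + 1) y : ℝ) = T := by
    exact_mod_cast sum_visitCount x (T + 1)
  calc ∑ t ∈ Icc 1 T, (√(visitCount x t (x t)))⁻¹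
      = ∑ y, ∑ t ∈ Icc 1 T with x t = y, (√(visitCount x t y))⁻¹ := by
        rw [← sum_fiberwise (Icc 1 T) x]
        refine sum_congr rfl fun y _ => sum_congr rfl fun t ht => ?_
        rw [(mem_filter.1 ht).2]
    _ ≤ ∑ y, 2 * (√1 * √(visitCount x (T + 1) y)) := by
        simpa using sum_le_sum fun y _ => sum_inv_sqrt_visitCount_fiber_le x T y
    _ ≤ 2 * (√(∑ _y : X, 1) * √(∑ y, (visitCount x (T + 1) y : ℝ))) := by
        rw [← mul_sum]
        gcongr
        exact Real.sum_sqrt_mul_sqrt_le _ (fun _ => zero_le_one) fun _ => Nat.cast_nonneg _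
    _ = 2 * √(Fintype.card X * T) := by
        rw [hT, ← Real.sqrt_mul (by positivity)]
        simp

end VisitCount

section Width

variable {X V : Type*} [SeminormedAddCommGroup V]

/-- The paper's `w_G(y)`; `width ∅ y = sSup ∅ = 0`. -/
noncomputable def width (G : Set (X → V)) (y : X) : ℝ :=
  sSup ((fun fg : (X → V) × (X → V) => ‖fg.1 y - fg.2 y‖) '' (G ×ˢ G))

lemma width_le {G : Set (X → V)} {y : X} {r : ℝ} (hr : 0 ≤ r)
    (h : ∀ f ∈ G, ∀ g ∈ G, ‖f y - g y‖ ≤ r) : width G y ≤ r := by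
  refine Real.sSup_le ?_ hr
  rintro _ ⟨⟨f, g⟩, ⟨hf, hg⟩, rfl⟩
  exact h f hf g hg

lemma width_le_two_mul {G : Set (X → V)} {y : X} {c : V} {r : ℝ} (hr : 0 ≤ r)
    (h : ∀ f ∈ G, ‖f y - c‖ ≤ r) : width G y ≤ 2 * r :=
  width_le (by positivity) fun f hf g hg => calc
    ‖f y - g y‖ ≤ ‖f y - c‖ + ‖g y - c‖ := by
      simpa only [dist_eq_norm] using dist_triangle_right (f y) (g y) c
    _ ≤ 2 * r := by linarith [h f hf, h g hg]

/-- The paper's confidence set `F_t`. -/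
noncomputable def confidenceSet (F : Set (X → V)) (x : ℕ → X) (d : ℕ → ℝ) (fhat : ℕ → X → V)
    (t : ℕ) : Set (X → V) :=
  {f ∈ F | ∀ i ∈ Ico 1 t, 0 < visitCount x t (x i) →
    ‖f (x i) - fhat t (x i)‖ ≤ √(d t / visitCount x t (x i))}

variable {F : Set (X → V)} {x : ℕ → X} {d : ℕ → ℝ} {fhat : ℕ → X → V}

lemma width_confidenceSet_le {t : ℕ} {y : X} (hy : 0 < visitCount x t y) :
    width (confidenceSet F x d fhat t) y ≤ 2 * √(d t / visitCount x t y) := by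
  obtain ⟨s, hs⟩ := card_pos.1 hy
  obtain ⟨hst, rfl⟩ := mem_filter.1 hs
  exact width_le_two_mul (Real.sqrt_nonneg _) fun f hf => hf.2 s hst hy

end Width

section Episodes

variable {X V : Type*} [Fintype X] [SeminormedAddCommGroup V] {F : Set (X → V)} {x : ℕ → X}
  {d : ℕ → ℝ} {fhat : ℕ → X → V} {ι : Type*} {E : Finset ι} {time start : ι → ℕ} {τ T : ℕ}

lemma card_filter_visitCount_lt_le (hinj : Set.InjOn time E) (htime : ∀ e ∈ E, 1 ≤ time e)
    (hstart : ∀ e ∈ E, start e ≤ time e ∧ time e ≤ start e + τ) :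
    #{e ∈ E | visitCount x (start e) (x (time e)) < τ} ≤ 2 * τ * Fintype.card X := by
  refine (card_le_mul_card_image_of_maps_to (f := fun e => x (time e)) (t := univ)
    (fun _ _ => mem_univ _) (2 * τ) fun y _ => ?_).trans_eq (by rw [card_univ])
  have hmaps : Set.MapsTo (fun e => visitCount x (time e) y)
      ↑{e ∈ {e ∈ E | visitCount x (start e) (x (time e)) < τ} | x (time e) = y}
      ↑(range (2 * τ)) := by
    intro e he
    simp only [mem_coe, mem_filter, mem_range] at he ⊢
    obtain ⟨⟨heE, hlt⟩, rfl⟩ := he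
    have := visitCount_le_add x (start e) (time e) (x (time e))
    have := hstart e heE
    omega
  have hinj' : Set.InjOn (fun e => visitCount x (time e) y)
      ↑{e ∈ {e ∈ E | visitCount x (start e) (x (time e)) < τ} | x (time e) = y} := by
    refine (strictMonoOn_visitCount x y).injOn.comp (hinj.mono fun e he => ?_) fun e he => ?_ <;>
      simp only [mem_coe, mem_filter] at he
    · exact he.1.1
    · exact ⟨htime e he.1.1, he.2⟩
  simpa using card_le_card_of_injOn _ hmaps hinj'

lemma sum_width_filter_le_visitCount_le (hd : Monotone d) (hinj : Set.InjOn time E)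
    (htime : ∀ e ∈ E, time e ∈ Icc 1 T)
    (hstart : ∀ e ∈ E, start e < time e ∧ time e ≤ start e + τ) :
    ∑ e ∈ E with τ ≤ visitCount x (start e) (x (time e)),
        width (confidenceSet F x d fhat (start e)) (x (time e))
      ≤ 4 * √(2 * d T * Fintype.card X * T) := by
  set B := {e ∈ E | τ ≤ visitCount x (start e) (x (time e))}
  have hpoint : ∀ e ∈ B, width (confidenceSet F x d fhat (start e)) (x (time e))
      ≤ 2 * √(2 * d T) * (√(visitCount x (time e) (x (time e))))⁻¹ := by
    intro e he
    obtain ⟨heE, hτn⟩ := mem_filter.1 he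
    obtain ⟨hst, hts⟩ := hstart e heE
    have hT := (mem_Icc.1 (htime e heE)).2
    have hpos : 0 < visitCount x (start e) (x (time e)) := by omega
    have hmono := visitCount_mono x hst.le (x (time e))
    have hdouble := visitCount_le_add x (start e) (time e) (x (time e))
    calc width (confidenceSet F x d fhat (start e)) (x (time e))
        ≤ 2 * √(d (start e) / visitCount x (start e) (x (time e))) := width_confidenceSet_le hpos
      _ ≤ 2 * (√(2 * d T) / √(visitCount x (time e) (x (time e)))) := by
          gcongr
          exact sqrt_div_le_sqrt_two_mul_div_sqrt (hd (by omega)) (by exact_mod_cast hpos)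
            (by exact_mod_cast hpos.trans_le hmono) (by exact_mod_cast (by omega))
      _ = _ := by ring
  have himage : image time B ⊆ Icc 1 T :=
    image_subset_iff.2 fun e he => htime e (mem_filter.1 he).1
  calc ∑ e ∈ B, width (confidenceSet F x d fhat (start e)) (x (time e))
      ≤ ∑ e ∈ B, 2 * √(2 * d T) * (√(visitCount x (time e) (x (time e))))⁻¹ := sum_le_sum hpoint
    _ = 2 * √(2 * d T) * ∑ t ∈ image time B, (√(visitCount x t (x t)))⁻¹ := by
        rw [mul_sum, sum_image (hinj.mono (filter_subset _ _))]
    _ ≤ 2 * √(2 * d T) * ∑ t ∈ Icc 1 T, (√(visitCount x t (x t)))⁻¹ :=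
        mul_le_mul_of_nonneg_left
          (sum_le_sum_of_subset_of_nonneg himage fun _ _ _ => by positivity) (by positivity)
    _ ≤ 2 * √(2 * d T) * (2 * √(Fintype.card X * T)) := by
        gcongr
        exact sum_inv_sqrt_visitCount_le x T
    _ = 4 * √(2 * d T * Fintype.card X * T) := by
        rw [show 2 * d T * Fintype.card X * T = 2 * d T * (Fintype.card X * T) by ring,
          Real.sqrt_mul' _ (by positivity : (0 : ℝ) ≤ Fintype.card X * T)]
        ring

theorem sum_width_confidenceSet_le {C : ℝ} (hC : 0 ≤ C)
    (hbound : ∀ f ∈ F, ∀ g ∈ F, ∀ y : X, ‖f y - g y‖ ≤ C) (hd : Monotone d)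
    (hinj : Set.InjOn time E) (htime : ∀ e ∈ E, time e ∈ Icc 1 T)
    (hstart : ∀ e ∈ E, start e < time e ∧ time e ≤ start e + τ) :
    ∑ e ∈ E, width (confidenceSet F x d fhat (start e)) (x (time e))
      ≤ 2 * τ * C * Fintype.card X + 4 * √(2 * d T * Fintype.card X * T) := by
  rw [← sum_filter_add_sum_filter_not E fun e => visitCount x (start e) (x (time e)) < τ]
  simp only [not_lt]
  refine add_le_add ?_ (sum_width_filter_le_visitCount_le hd hinj htime hstart)
  have hcard := card_filter_visitCount_lt_le (x := x) hinj
    (fun e he => (mem_Icc.1 (htime e he)).1) fun e he => ⟨(hstart e he).1.le, (hstart e he).2⟩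
  calc ∑ e ∈ E with visitCount x (start e) (x (time e)) < τ,
        width (confidenceSet F x d fhat (start e)) (x (time e))
      ≤ #{e ∈ E | visitCount x (start e) (x (time e)) < τ} • C :=
        sum_le_card_nsmul _ _ _ fun e _ => width_le hC fun f hf g hg => hbound f hf.1 g hg.1 _
    _ ≤ (2 * τ * Fintype.card X) • C := nsmul_le_nsmul_left hC hcard
    _ = 2 * τ * C * Fintype.card X := by rw [nsmul_eq_mul]; push_cast; ring

end Episodes

lemma episode_time_injOn (L τ : ℕ) :
    Set.InjOn (fun p : ℕ × ℕ => (p.1 - 1) * τ + p.2) ↑(Icc 1 L ×ˢ Icc 1 τ) := by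
  have hlt : ∀ {k k' i i' : ℕ}, k < k' → i ≤ τ → 1 ≤ i' → k * τ + i < k' * τ + i' :=
    fun hk hi hi' => by nlinarith
  rintro ⟨k, i⟩ hp ⟨k', i'⟩ hp' h
  simp only [coe_product, Set.mem_prod, mem_coe, mem_Icc] at hp hp' h
  rcases lt_trichotomy (k - 1) (k' - 1) with hk | hk | hk
  · exact absurd h (hlt hk hp.2.2 hp'.2.1).ne
  · rw [hk] at h
    ext <;> omega
  · exact absurd h (hlt hk hp'.2.2 hp.2.1).ne'

theorem sum_of_widths_le_general
    {X : Type*} [Fintype X] {V : Type*} [SeminormedAddCommGroup V]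
    (F : Set (X → V))
    (C : ℝ) (hC : 0 ≤ C)
    (hbound : ∀ f ∈ F, ∀ g ∈ F, ∀ y : X, ‖f y - g y‖ ≤ C)
    (L τ : ℕ) (T : ℕ) (hT : T = L * τ)
    (x : ℕ → X)
    (d : ℕ → ℝ) (hdmono : Monotone d)
    (fhat : ℕ → X → V) :
    (let nvisit : ℕ → X → ℕ :=
        fun t y => ((Finset.Ico 1 t).filter (fun s => x s = y)).card
     let Ft : ℕ → Set (X → V) := fun t =>
        {f ∈ F | ∀ i ∈ Finset.Ico 1 t, 0 < nvisit t (x i) →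
            ‖f (x i) - fhat t (x i)‖ ≤ Real.sqrt (d t / (nvisit t (x i) : ℝ))}
     let width : Set (X → V) → X → ℝ := fun G y =>
        sSup ((fun fg : (X → V) × (X → V) => ‖fg.1 y - fg.2 y‖) '' (G ×ˢ G))
     ∑ k ∈ Finset.Icc 1 L, ∑ i ∈ Finset.Icc 1 τ,
        width (Ft ((k - 1) * τ)) (x ((k - 1) * τ + i)))
    ≤ 4 * (τ * C * Fintype.card X + 1)
        + 4 * Real.sqrt (2 * d T * Fintype.card X * T) := by
  show ∑ k ∈ Icc 1 L, ∑ i ∈ Icc 1 τ,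
      width (confidenceSet F x d fhat ((k - 1) * τ)) (x ((k - 1) * τ + i)) ≤ _
  rw [← sum_product']
  refine (sum_width_confidenceSet_le (E := Icc 1 L ×ˢ Icc 1 τ)
    (time := fun p => (p.1 - 1) * τ + p.2) (start := fun p => (p.1 - 1) * τ) (τ := τ) (T := T)
    hC hbound hdmono (episode_time_injOn L τ) ?_ ?_).trans ?_
  · rintro ⟨k, i⟩ hp
    simp only [mem_product, mem_Icc] at hp ⊢
    have hend : (k - 1) * τ + τ ≤ L * τ := by
      rw [← Nat.succ_mul]
      exact Nat.mul_le_mul_right _ (by omega)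
    omega
  · rintro ⟨k, i⟩ hp
    simp only [mem_product, mem_Icc] at hp ⊢
    omega
  · have : 0 ≤ τ * C * Fintype.card X := by positivity
    linarith

/-- Theorem 3 (Bounding the sum of widths): for confidence sets
F_t := {f ∈ F : ‖f(x_i) − f̂_t(x_i)‖ ≤ √(d_t/n_t(x_i)) for all i < t with n_t(x_i) > 0}
built from a class F of uniformly C-bounded width, with episodes of length τ,
episode starts t_k = (k−1)τ and T = Lτ, the sum of the widths of F_{t_k} at the
visited points is at most 4(τC|X| + 1) + 4√(2 d_T |X| T). -/
theorem sum_of_widths_le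
    {X : Type*} [Fintype X] {V : Type*} [SeminormedAddCommGroup V] [NormedSpace ℝ V]
    (F : Set (X → V)) (hFne : F.Nonempty)
    (C : ℝ) (hC : 0 ≤ C)
    (hbound : ∀ f ∈ F, ∀ g ∈ F, ∀ y : X, ‖f y - g y‖ ≤ C)
    (L τ : ℕ) (hL : 0 < L) (hτ : 0 < τ) (T : ℕ) (hT : T = L * τ)
    (x : ℕ → X)
    (d : ℕ → ℝ) (hd0 : ∀ t, 0 ≤ d t) (hdmono : Monotone d)
    (fhat : ℕ → X → V) :
    (let nvisit : ℕ → X → ℕ :=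
        fun t y => ((Finset.Ico 1 t).filter (fun s => x s = y)).card
     let Ft : ℕ → Set (X → V) := fun t =>
        {f ∈ F | ∀ i ∈ Finset.Ico 1 t, 0 < nvisit t (x i) →
            ‖f (x i) - fhat t (x i)‖ ≤ Real.sqrt (d t / (nvisit t (x i) : ℝ))}
     let width : Set (X → V) → X → ℝ := fun G y =>
        sSup ((fun fg : (X → V) × (X → V) => ‖fg.1 y - fg.2 y‖) '' (G ×ˢ G))
     ∑ k ∈ Finset.Icc 1 L, ∑ i ∈ Finset.Icc 1 τ,
        width (Ft ((k - 1) * τ)) (x ((k - 1) * τ + i)))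
    ≤ 4 * (τ * C * Fintype.card X + 1)
        + 4 * Real.sqrt (2 * d T * Fintype.card X * T) :=
  sum_of_widths_le_general F C hC hbound L τ T hT x d hdmono fhat
end
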